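/- arXiv:0905.3098 — 2 statements merged into one kernel-verified Lean document; each statement's English description precedes it below -/
import Mathlib

section
/- Let (X,T) be a transitive system and d ≥ 1. Points x,y ∈ X are regionally proximal of order d (written (x,y) ∈ RP^[d]) if and only if there exists a_* ∈ X^{2^d − 1} such that the point (x, a_*, y, a_*) ∈ X^{2^{d+1}} belongs to Q^[d+1](X). -/
open Filter Topology

noncomputable section

def dotP {d : ℕ} (n : Fin d → ℤ) (ε : Fin d → Bool) : ℤ :=
  ∑ i, if ε i then n i else 0

def vertex0 (d : ℕ) : Fin d → Bool := fun _ => false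

def cubeQ (X : Type*) [TopologicalSpace X] (T : X ≃ₜ X) (d : ℕ) :
    Set ((Fin d → Bool) → X) :=
  closure {y | ∃ (x : X) (n : Fin d → ℤ), y = fun ε => (T.toEquiv ^ dotP n ε) x}

/-- The regionally proximal relation of order `d`. -/
def RP (X : Type*) [MetricSpace X] (T : X ≃ₜ X) (d : ℕ) : Set (X × X) :=
  {p | ∀ δ > 0, ∃ (x' y' : X) (n : Fin d → ℤ),
    dist p.1 x' < δ ∧ dist p.2 y' < δ ∧
    ∀ ε : Fin d → Bool, ε ≠ vertex0 d →
      dist ((T.toEquiv ^ dotP n ε) x') ((T.toEquiv ^ dotP n ε) y') < δ}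

/-- The point of `X^{2^{d+1}}` with value `a` at the vertex `∅` and given by `b`
elsewhere. -/
def set0 {X : Type*} {d : ℕ} (a : X) (b : (Fin d → Bool) → X) : (Fin d → Bool) → X :=
  fun ε => if ε = vertex0 d then a else b ε

/-- The restriction of `ε : {0,1}^{d+1}` to its first `d` coordinates. -/
def front {d : ℕ} (ε : Fin (d + 1) → Bool) : Fin d → Bool := fun i => ε i.castSucc

/-! Let `G = toGlueCube x y` send `c ∈ X^{2^{d+1}}` to the point `(x, a_*, y, a_*)` whose `a_*`
is read off the face `ε_{d+1} = 0` of `c`; its fixed points are exactly the points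
`(x, a_*, y, a_*)`. For the cube `c` spanned by `z` and `(n, m)`, the bound `dist c (G c) < δ`
says precisely that `(z, T^m z, n)` witnesses `(x, y) ∈ RP^[d]` at scale `δ`, and transitivity
moves every witness onto one orbit, into this form. As `Q^[d+1]` is compact and
`c ↦ dist c (G c)` is continuous, `G` has a fixed point in `Q^[d+1]` iff this distance is
arbitrarily small on cubes. -/

section

variable {X : Type*}

lemma Homeomorph.continuous_toEquiv_zpow [TopologicalSpace X] (T : X ≃ₜ X) (k : ℤ) :
    Continuous (T.toEquiv ^ k) := by
  have h : (T ^ k).toEquiv = T.toEquiv ^ k :=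
    map_zpow (MonoidHom.mk' Homeomorph.toEquiv fun _ _ => rfl) T k
  exact h ▸ (T ^ k).continuous

lemma dotP_snoc {d : ℕ} (n : Fin d → ℤ) (m : ℤ) (ε : Fin d → Bool) (b : Bool) :
    dotP (Fin.snoc n m) (Fin.snoc ε b) = dotP n ε + if b then m else 0 := by
  simp [dotP, Fin.sum_univ_castSucc]

lemma forall_fin_succ_pi_snoc {n : ℕ} {α : Type*} {P : (Fin (n + 1) → α) → Prop} :
    (∀ v, P v) ↔ ∀ v a, P (Fin.snoc v a) :=
  ⟨fun h _ _ => h _, fun h v => Fin.snoc_init_self v ▸ h _ _⟩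

lemma front_snoc {d : ℕ} (ε : Fin d → Bool) (b : Bool) : front (Fin.snoc ε b) = ε :=
  funext fun _ => Fin.snoc_castSucc ..

section Cube

variable [TopologicalSpace X] (T : X ≃ₜ X) {d : ℕ}

def cube (z : X) (n : Fin d → ℤ) : (Fin d → Bool) → X :=
  fun ε => (T.toEquiv ^ dotP n ε) z

@[simp]
lemma cube_vertex0 (z : X) (n : Fin d → ℤ) : cube T z n (vertex0 d) = z := by
  simp [cube, dotP, vertex0]

lemma cube_snoc_snoc (z : X) (n : Fin d → ℤ) (m : ℤ) (ε : Fin d → Bool) (b : Bool) :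
    cube T z (Fin.snoc n m) (Fin.snoc ε b) = cube T (if b then (T.toEquiv ^ m) z else z) n ε := by
  cases b <;> simp [cube, dotP_snoc, zpow_add, Equiv.Perm.mul_apply]

end Cube

lemma exists_isFixedPt_mem_closure_iff {Y : Type*} [MetricSpace Y] [CompactSpace Y]
    {G : Y → Y} (hG : Continuous G) (S : Set Y) :
    (∃ c ∈ closure S, Function.IsFixedPt G c) ↔ ∀ δ > 0, ∃ c ∈ S, dist c (G c) < δ := by
  have hf : Continuous fun c => dist c (G c) := continuous_id.dist hG
  have himage := image_closure_of_isCompact (s := S) isClosed_closure.isCompact hf.continuousOn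
  have h0 : (∃ c ∈ closure S, Function.IsFixedPt G c) ↔
      (0 : ℝ) ∈ (fun c => dist c (G c)) '' closure S := by
    simp only [Set.mem_image, dist_eq_zero, Function.IsFixedPt, eq_comm]
  rw [h0, himage, Metric.mem_closure_iff]
  simp [Real.dist_eq, abs_of_nonneg dist_nonneg]

section RP

variable [PseudoMetricSpace X] (T : X ≃ₜ X) {d : ℕ}

def RPWitness (δ : ℝ) (x y x' y' : X) (n : Fin d → ℤ) : Prop :=
  dist x x' < δ ∧ dist y y' < δ ∧
    ∀ ε : Fin d → Bool, ε ≠ vertex0 d →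
      dist ((T.toEquiv ^ dotP n ε) x') ((T.toEquiv ^ dotP n ε) y') < δ

lemma isOpen_setOf_RPWitness (δ : ℝ) (x y : X) (n : Fin d → ℤ) :
    IsOpen {p : X × X | RPWitness T δ x y p.1 p.2 n} := by
  simp only [RPWitness, Set.ofPred_and, Set.ofPred_forall]
  have hT := T.continuous_toEquiv_zpow
  refine (isOpen_lt (continuous_const.dist continuous_fst) continuous_const).inter <|
    (isOpen_lt (continuous_const.dist continuous_snd) continuous_const).inter <|
    isOpen_iInter_of_finite fun ε => isOpen_iInter_of_finite fun (_ : ε ≠ vertex0 d) =>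
      isOpen_lt (((hT _).comp continuous_fst).dist ((hT _).comp continuous_snd)) continuous_const

end RP

lemma mem_RP_iff_forall_exists_orbit [MetricSpace X] (T : X ≃ₜ X) {d : ℕ} {w : X}
    (hw : Dense (Set.range fun n : ℤ => (T.toEquiv ^ n) w)) (x y : X) :
    (x, y) ∈ RP X T d ↔
      ∀ δ > 0, ∃ (z : X) (m : ℤ) (n : Fin d → ℤ), RPWitness T δ x y z ((T.toEquiv ^ m) z) n := by
  refine ⟨fun h δ hδ => ?_, fun h δ hδ => ?_⟩
  · obtain ⟨x', y', n, hW⟩ := h δ hδ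
    obtain ⟨⟨_, _⟩, ⟨⟨p, rfl⟩, ⟨q, rfl⟩⟩, hpq⟩ :=
      (hw.prod hw).exists_mem_open (isOpen_setOf_RPWitness T δ x y n) ⟨(x', y'), hW⟩
    refine ⟨(T.toEquiv ^ p) w, q - p, n, ?_⟩
    rwa [← Equiv.Perm.mul_apply, ← zpow_add, sub_add_cancel]
  · obtain ⟨z, m, n, hW⟩ := h δ hδ
    exact ⟨z, _, n, hW⟩

section Glue

variable {d : ℕ} (x y : X)

def glueCube (a : (Fin d → Bool) → X) : (Fin (d + 1) → Bool) → X :=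
  fun ε => if front ε = vertex0 d then (if ε (Fin.last d) then y else x) else a (front ε)

def toGlueCube (c : (Fin (d + 1) → Bool) → X) : (Fin (d + 1) → Bool) → X :=
  glueCube x y fun ε => c (Fin.snoc ε false)

lemma glueCube_snoc (a : (Fin d → Bool) → X) (ε : Fin d → Bool) (b : Bool) :
    glueCube x y a (Fin.snoc ε b) = if ε = vertex0 d then (if b then y else x) else a ε := by
  simp [glueCube, front_snoc]

lemma toGlueCube_glueCube (a : (Fin d → Bool) → X) :
    toGlueCube x y (glueCube x y a) = glueCube x y a := by
  funext ε
  simp only [toGlueCube, glueCube, front_snoc]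
  split_ifs <;> rfl

lemma exists_isFixedPt_toGlueCube_iff (C : Set ((Fin (d + 1) → Bool) → X)) :
    (∃ c ∈ C, Function.IsFixedPt (toGlueCube x y) c) ↔ ∃ a, glueCube x y a ∈ C :=
  ⟨fun ⟨_, hC, hc⟩ => ⟨_, hc.symm ▸ hC⟩, fun ⟨a, ha⟩ => ⟨_, ha, toGlueCube_glueCube x y a⟩⟩

lemma continuous_toGlueCube [TopologicalSpace X] : Continuous (toGlueCube (d := d) x y) := by
  refine continuous_pi fun ε => ?_
  unfold toGlueCube glueCube
  split_ifs <;> fun_prop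

lemma dist_cube_toGlueCube_lt_iff [PseudoMetricSpace X] (T : X ≃ₜ X) {δ : ℝ} (hδ : 0 < δ)
    (z : X) (n : Fin d → ℤ) (m : ℤ) :
    dist (cube T z (Fin.snoc n m)) (toGlueCube x y (cube T z (Fin.snoc n m))) < δ ↔
      RPWitness T δ x y z ((T.toEquiv ^ m) z) n := by
  rw [dist_pi_lt_iff hδ, forall_fin_succ_pi_snoc]
  simp only [Bool.forall_bool, toGlueCube, glueCube_snoc, cube_snoc_snoc, forall_and,
    Bool.false_eq_true, if_false, if_true]
  constructor
  · rintro ⟨hx, hy⟩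
    refine ⟨?_, ?_, fun ε hε => ?_⟩
    · simpa [dist_comm] using hx (vertex0 d)
    · simpa [dist_comm] using hy (vertex0 d)
    · simpa [hε, cube, dist_comm] using hy ε
  · rintro ⟨hx, hy, hn⟩
    refine ⟨fun ε => ?_, fun ε => ?_⟩ <;> by_cases hε : ε = vertex0 d
    · simpa [hε, dist_comm] using hx
    · simpa [hε] using hδ
    · simpa [hε, dist_comm] using hy
    · simpa [hε, cube, dist_comm] using hn ε hε

lemma exists_cube_dist_toGlueCube_lt_iff [PseudoMetricSpace X] (T : X ≃ₜ X) {δ : ℝ}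
    (hδ : 0 < δ) :
    (∃ c ∈ {c | ∃ (z : X) (N : Fin (d + 1) → ℤ), c = cube T z N},
        dist c (toGlueCube x y c) < δ) ↔
      ∃ (z : X) (m : ℤ) (n : Fin d → ℤ), RPWitness T δ x y z ((T.toEquiv ^ m) z) n := by
  constructor
  · rintro ⟨_, ⟨z, N, rfl⟩, hN⟩
    rw [← Fin.snoc_init_self N, dist_cube_toGlueCube_lt_iff x y T hδ] at hN
    exact ⟨z, _, _, hN⟩
  · rintro ⟨z, m, n, hW⟩
    exact ⟨_, ⟨z, Fin.snoc n m, rfl⟩, (dist_cube_toGlueCube_lt_iff x y T hδ z n m).2 hW⟩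

end Glue

end

theorem RP_iff_cubeQ_general
    {X : Type*} [MetricSpace X] [CompactSpace X] (T : X ≃ₜ X) (d : ℕ)
    (htrans : ∃ x : X, Dense (Set.range fun n : ℤ => (T.toEquiv ^ n) x))
    (x y : X) :
    (x, y) ∈ RP X T d ↔
      ∃ a : (Fin d → Bool) → X,
        (fun ε : Fin (d + 1) → Bool =>
          if front ε = vertex0 d then (if ε (Fin.last d) then y else x)
          else a (front ε)) ∈ cubeQ X T (d + 1) := by
  obtain ⟨w, hw⟩ := htrans
  change _ ↔ ∃ a, glueCube x y a ∈ cubeQ X T (d + 1)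
  rw [← exists_isFixedPt_toGlueCube_iff, cubeQ,
    exists_isFixedPt_mem_closure_iff (continuous_toGlueCube x y),
    mem_RP_iff_forall_exists_orbit T hw]
  exact forall₂_congr fun δ hδ => (exists_cube_dist_toGlueCube_lt_iff x y T hδ).symm

/-- `(x,y) ∈ RP^[d]` iff there exists `a_*` with `(x, a_*, y, a_*) ∈ Q^[d+1]`. -/
theorem RP_iff_cubeQ
    {X : Type*} [MetricSpace X] [CompactSpace X] (T : X ≃ₜ X) (d : ℕ) (hd : 1 ≤ d)
    (htrans : ∃ x : X, Dense (Set.range fun n : ℤ => (T.toEquiv ^ n) x))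
    (x y : X) :
    (x, y) ∈ RP X T d ↔
      ∃ a : (Fin d → Bool) → X,
        (fun ε : Fin (d + 1) → Bool =>
          if front ε = vertex0 d then (if ε (Fin.last d) then y else x)
          else a (front ε)) ∈ cubeQ X T (d + 1) :=
  RP_iff_cubeQ_general T d htrans x y
end
end

section
/- Let (X,T) be a minimal distal system, d ≥ 1, x,y ∈ X, and b_* ∈ X^{2^{d+1}−1} such that (x, b_*) ∈ Q^[d+1](X). Then (y, b_*) ∈ Q^[d+1](X) if and only if (y, x, x, …, x) ∈ Q^[d+1](X). -/
open Filter Topology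

noncomputable section

/-!
The face transformations and the diagonal action of `T` generate a group acting coordinatewise
on `X^{2^k}`; its closure `E` in `(Fin k → Bool) → X → X` (the Ellis semigroup) acts on cubes by
`Pi.map` and preserves `Q^[k]`. Since `X` is minimal, `Q^[k] = E · x^[k]`, so `(x, b_*) = π · x^[k]`
for some `π ∈ E`. Distality makes `E` a group. With `σ` the inverse of `π` and `Δ f = (f, …, f)`,
the element `Δ(π_∅) σ` maps `(y, b_*)` to `(y, x, …, x)` and `π Δ(σ_∅)` maps `(y, x, …, x)` back
to `(y, b_*)`.
-/

open Function Set

theorem injective_of_mem_closure {Z : Type*} [PseudoMetricSpace Z] {S : Set (Z → Z)}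
    (hdistal : ∀ a b : Z, a ≠ b → ∃ δ > 0, ∀ f ∈ S, δ ≤ dist (f a) (f b))
    {f : Z → Z} (hf : f ∈ closure S) : Injective f := by
  intro a b hab
  by_contra hne
  obtain ⟨δ, hδ, hS⟩ := hdistal a b hne
  have hclosed : IsClosed {f : Z → Z | δ ≤ dist (f a) (f b)} :=
    isClosed_le continuous_const ((continuous_apply a).dist (continuous_apply b))
  have : δ ≤ dist (f a) (f b) := closure_minimal hS hclosed hf
  rw [hab, dist_self] at this
  exact hδ.not_ge this

section Ellis

variable {Z : Type*} [TopologicalSpace Z] {S : Set (Z → Z)}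

theorem comp_mem_closure (hcont : ∀ f ∈ S, Continuous f)
    (hcomp : ∀ f ∈ S, ∀ g ∈ S, f ∘ g ∈ S) {f g : Z → Z} (hf : f ∈ closure S)
    (hg : g ∈ closure S) : f ∘ g ∈ closure S := by
  have hleft : ∀ f ∈ S, f ∘ g ∈ closure S := fun f' hf' =>
    map_mem_closure (continuous_pi fun z => (hcont f' hf').comp (continuous_apply z)) hg
      (hcomp f' hf')
  have := map_mem_closure (continuous_pi fun z => continuous_apply (g z)) hf hleft
  rwa [closure_closure] at this

theorem exists_inverse_mem_closure [CompactSpace Z] [T2Space Z]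
    (hcont : ∀ f ∈ S, Continuous f) (hid : id ∈ S) (hcomp : ∀ f ∈ S, ∀ g ∈ S, f ∘ g ∈ S)
    (hinj : ∀ f ∈ closure S, Injective f) {p : Z → Z} (hp : p ∈ closure S) :
    ∃ q ∈ closure S, LeftInverse q p ∧ RightInverse q p := by
  let _ : Semigroup (Z → Z) := { mul := (· ∘ ·), mul_assoc := fun _ _ _ => rfl }
  set K := (· ∘ p) '' closure S
  have hright : Continuous fun f : Z → Z => f ∘ p :=
    continuous_pi fun z => continuous_apply (p z)
  have hK : IsCompact K := isClosed_closure.isCompact.image hright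
  have hKmul : ∀ f ∈ K, ∀ g ∈ K, f * g ∈ K := by
    rintro _ ⟨f, hf, rfl⟩ _ ⟨g, hg, rfl⟩
    exact ⟨f ∘ p ∘ g, comp_mem_closure hcont hcomp hf (comp_mem_closure hcont hcomp hp hg), rfl⟩
  obtain ⟨_, ⟨q, hq, rfl⟩, hidem⟩ := exists_idempotent_in_compact_subsemigroup
    (fun r => continuous_pi fun z => continuous_apply (r z)) K
    ⟨id ∘ p, id, subset_closure hid, rfl⟩ hK hKmul
  -- an injective idempotent is the identity
  have hqp : LeftInverse q p := fun z =>
    hinj _ (comp_mem_closure hcont hcomp hq hp) (congrFun hidem z)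
  exact ⟨q, hq, hqp, fun z => hinj q hq (hqp (q z))⟩

end Ellis

section Cube

variable {X : Type*} [TopologicalSpace X] (T : X ≃ₜ X) {k : ℕ}

theorem continuous_toEquiv_zpow (n : ℤ) : Continuous ⇑(T.toEquiv ^ n) := by
  have : T.toEquiv ^ n = (T ^ n).toEquiv :=
    (map_zpow ({ toFun := Homeomorph.toEquiv, map_one' := rfl, map_mul' := fun _ _ => rfl } :
      (X ≃ₜ X) →* Equiv.Perm X) T n).symm
  rw [this]
  exact (T ^ n).continuous

theorem dotP_add (n n' : Fin k → ℤ) (ε : Fin k → Bool) :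
    dotP (n + n') ε = dotP n ε + dotP n' ε := by
  simp only [dotP, ← Finset.sum_add_distrib]
  refine Finset.sum_congr rfl fun i _ => ?_
  split_ifs <;> simp

theorem dotP_zero (ε : Fin k → Bool) : dotP (0 : Fin k → ℤ) ε = 0 := by
  simp [dotP]

/-- The face transformation with exponents `n` composed with the diagonal `T^l`, as the tuple
of maps it applies to the coordinates of a cube. -/
def cubeGen (n : Fin k → ℤ) (l : ℤ) : (Fin k → Bool) → X → X :=
  fun ε => ⇑(T.toEquiv ^ (dotP n ε + l))

theorem cubeGen_comp (n n' : Fin k → ℤ) (l l' : ℤ) (ε : Fin k → Bool) :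
    cubeGen T n l ε ∘ cubeGen T n' l' ε = cubeGen T (n + n') (l + l') ε := by
  simp only [cubeGen, ← Equiv.Perm.coe_mul, ← zpow_add, dotP_add]
  congr 2
  ring

theorem cubeGen_zero : cubeGen T (0 : Fin k → ℤ) 0 = fun _ => id := by
  funext ε
  simp [cubeGen, dotP_zero]

theorem continuous_cubeGen (n : Fin k → ℤ) (l : ℤ) (ε : Fin k → Bool) :
    Continuous (cubeGen T n l ε) :=
  continuous_toEquiv_zpow T _

def cubeEllis (T : X ≃ₜ X) (k : ℕ) : Set ((Fin k → Bool) → X → X) :=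
  closure (range fun nl : (Fin k → ℤ) × ℤ => cubeGen T nl.1 nl.2)

theorem const_apply_mem_cubeEllis {π : (Fin k → Bool) → X → X} (hπ : π ∈ cubeEllis T k)
    (ε₀ : Fin k → Bool) : (fun _ => π ε₀) ∈ cubeEllis T k := by
  refine map_mem_closure (continuous_pi fun _ => continuous_apply ε₀) hπ ?_
  rintro _ ⟨⟨n, l⟩, rfl⟩
  refine ⟨(0, dotP n ε₀ + l), ?_⟩
  funext ε
  simp [cubeGen, dotP_zero]

theorem continuous_piMap_apply (c : (Fin k → Bool) → X) :
    Continuous fun π : (Fin k → Bool) → X → X => Pi.map π c :=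
  continuous_pi fun ε => (continuous_apply (c ε)).comp (continuous_apply ε)

theorem piMap_cubeGen_mem_cubeQ (n : Fin k → ℤ) (l : ℤ) {c : (Fin k → Bool) → X}
    (hc : c ∈ cubeQ X T k) : Pi.map (cubeGen T n l) c ∈ cubeQ X T k := by
  refine map_mem_closure (Continuous.piMap (continuous_cubeGen T n l)) hc ?_
  rintro _ ⟨x, m, rfl⟩
  refine ⟨(T.toEquiv ^ l) x, n + m, ?_⟩
  funext ε
  simp only [Pi.map_apply, cubeGen, ← Equiv.Perm.mul_apply, ← zpow_add, dotP_add]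
  congr 2
  ring

theorem piMap_mem_cubeQ {π : (Fin k → Bool) → X → X} (hπ : π ∈ cubeEllis T k)
    {c : (Fin k → Bool) → X} (hc : c ∈ cubeQ X T k) : Pi.map π c ∈ cubeQ X T k := by
  have := map_mem_closure (t := cubeQ X T k) (continuous_piMap_apply c) hπ (by
    rintro _ ⟨⟨n, l⟩, rfl⟩
    exact piMap_cubeGen_mem_cubeQ T n l hc)
  exact (isClosed_closure : IsClosed (cubeQ X T k)).closure_subset this

theorem cubeQ_subset_image_cubeEllis [CompactSpace X] [T2Space X] {x : X}
    (hx : Dense (range fun l : ℤ => (T.toEquiv ^ l) x)) :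
    cubeQ X T k ⊆ (fun π => Pi.map π fun _ => x) '' cubeEllis T k := by
  rw [cubeEllis, ← ((continuous_piMap_apply _).isClosedMap).closure_image_eq_of_continuous
    (continuous_piMap_apply _)]
  refine closure_minimal ?_ isClosed_closure
  rintro _ ⟨x', n, rfl⟩
  -- `x'` is a limit of `T^l x`, and the corresponding cubes are images of `x^[k]`
  refine map_mem_closure (continuous_pi fun ε => continuous_toEquiv_zpow T (dotP n ε))
    (hx x') ?_
  rintro _ ⟨l, rfl⟩
  refine ⟨cubeGen T n l, ⟨(n, l), rfl⟩, ?_⟩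
  funext ε
  simp [cubeGen, zpow_add]

end Cube

theorem injective_apply_of_mem_cubeEllis {X : Type*} [PseudoMetricSpace X] {T : X ≃ₜ X}
    (hdistal : ∀ x y : X, x ≠ y →
      ∃ δ > 0, ∀ n : ℤ, δ ≤ dist ((T.toEquiv ^ n) x) ((T.toEquiv ^ n) y))
    {k : ℕ} {π : (Fin k → Bool) → X → X} (hπ : π ∈ cubeEllis T k) (ε : Fin k → Bool) :
    Injective (π ε) := by
  refine injective_of_mem_closure (S := range fun n : ℤ => ⇑(T.toEquiv ^ n)) ?_
    (map_mem_closure (f := fun π => π ε) (continuous_apply ε) hπ ?_)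
  · simpa only [forall_mem_range] using hdistal
  · rintro _ ⟨⟨n, l⟩, rfl⟩
    exact ⟨_, rfl⟩

theorem exists_inverse_mem_cubeEllis {X : Type*} [MetricSpace X] [CompactSpace X]
    {T : X ≃ₜ X}
    (hdistal : ∀ x y : X, x ≠ y →
      ∃ δ > 0, ∀ n : ℤ, δ ≤ dist ((T.toEquiv ^ n) x) ((T.toEquiv ^ n) y))
    {k : ℕ} {π : (Fin k → Bool) → X → X} (hπ : π ∈ cubeEllis T k) :
    ∃ σ ∈ cubeEllis T k, ∀ ε, LeftInverse (σ ε) (π ε) ∧ RightInverse (σ ε) (π ε) := by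
  have hPi : Continuous (Pi.map : ((Fin k → Bool) → X → X) → _) :=
    continuous_pi fun c => continuous_piMap_apply c
  have hclosure : closure (Pi.map '' range fun nl : (Fin k → ℤ) × ℤ => cubeGen T nl.1 nl.2) =
      Pi.map '' cubeEllis T k :=
    hPi.isClosedMap.closure_image_eq_of_continuous hPi _
  obtain ⟨q, hq, hqp, hpq⟩ := exists_inverse_mem_closure
    (S := Pi.map '' range fun nl : (Fin k → ℤ) × ℤ => cubeGen T nl.1 nl.2)
    (by rintro _ ⟨_, ⟨⟨n, l⟩, rfl⟩, rfl⟩; exact Continuous.piMap (continuous_cubeGen T n l))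
    ⟨_, ⟨(0, 0), rfl⟩, by simp only [cubeGen_zero]; rfl⟩
    (by
      rintro _ ⟨_, ⟨⟨n, l⟩, rfl⟩, rfl⟩ _ ⟨_, ⟨⟨n', l'⟩, rfl⟩, rfl⟩
      refine ⟨_, ⟨(n + n', l + l'), rfl⟩, ?_⟩
      simp only [Pi.map_comp_map, cubeGen_comp])
    (by
      rw [hclosure]
      rintro _ ⟨σ, hσ, rfl⟩
      exact Injective.piMap (injective_apply_of_mem_cubeEllis hdistal hσ))
    (hclosure ▸ mem_image_of_mem Pi.map hπ)
  rw [hclosure] at hq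
  obtain ⟨σ, hσ, rfl⟩ := hq
  exact ⟨σ, hσ, fun ε => ⟨fun z => congrFun (hqp fun _ => z) ε,
    fun z => congrFun (hpq fun _ => z) ε⟩⟩

theorem cubeQ_replacement_general
    {X : Type*} [MetricSpace X] [CompactSpace X] (T : X ≃ₜ X) (d : ℕ)
    (hmin : ∀ x : X, Dense (Set.range fun n : ℤ => (T.toEquiv ^ n) x))
    (hdistal : ∀ x y : X, x ≠ y →
      ∃ δ > 0, ∀ n : ℤ, δ ≤ dist ((T.toEquiv ^ n) x) ((T.toEquiv ^ n) y))
    (x y : X) (b : (Fin (d + 1) → Bool) → X)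
    (hxb : set0 x b ∈ cubeQ X T (d + 1)) :
    set0 y b ∈ cubeQ X T (d + 1) ↔
      set0 y (fun _ => x) ∈ cubeQ X T (d + 1) := by
  obtain ⟨π, hπ, hπx⟩ := cubeQ_subset_image_cubeEllis T (hmin x) hxb
  obtain ⟨σ, hσ, hσπ⟩ := exists_inverse_mem_cubeEllis hdistal hπ
  have hx : π (vertex0 _) x = x := by simpa [set0] using congrFun hπx (vertex0 _)
  have hb : ∀ ε ≠ vertex0 _, π ε x = b ε := fun ε hε => by
    simpa [set0, hε] using congrFun hπx ε
  constructor
  · intro hy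
    convert piMap_mem_cubeQ T (const_apply_mem_cubeEllis T hπ (vertex0 _))
      (piMap_mem_cubeQ T hσ hy) using 1
    funext ε
    by_cases hε : ε = vertex0 _
    · simp [set0, hε, (hσπ _).2 y]
    · simp [set0, hε, ← hb ε hε, (hσπ ε).1 x, hx]
  · intro hy
    have hσx : σ (vertex0 _) x = x := by simpa [hx] using (hσπ (vertex0 (d + 1))).1 x
    convert piMap_mem_cubeQ T hπ
      (piMap_mem_cubeQ T (const_apply_mem_cubeEllis T hσ (vertex0 _)) hy) using 1
    funext ε
    by_cases hε : ε = vertex0 _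
    · simp [set0, hε, (hσπ _).2 y]
    · simp [set0, hε, ← hb ε hε, hσx]

/-- Replacement property: if `(x, b_*) ∈ Q^[d+1]`, then `(y, b_*) ∈ Q^[d+1]` iff
`(y, x, …, x) ∈ Q^[d+1]`. -/
theorem cubeQ_replacement
    {X : Type*} [MetricSpace X] [CompactSpace X] (T : X ≃ₜ X) (d : ℕ) (hd : 1 ≤ d)
    (hmin : ∀ x : X, Dense (Set.range fun n : ℤ => (T.toEquiv ^ n) x))
    (hdistal : ∀ x y : X, x ≠ y →
      ∃ δ > 0, ∀ n : ℤ, δ ≤ dist ((T.toEquiv ^ n) x) ((T.toEquiv ^ n) y))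
    (x y : X) (b : (Fin (d + 1) → Bool) → X)
    (hxb : set0 x b ∈ cubeQ X T (d + 1)) :
    set0 y b ∈ cubeQ X T (d + 1) ↔
      set0 y (fun _ => x) ∈ cubeQ X T (d + 1) :=
  cubeQ_replacement_general T d hmin hdistal x y b hxb
end
end
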